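/- arXiv:1304.0236 — 3 statements merged into one kernel-verified Lean document; each statement's English description precedes it below -/
import Mathlib

section
/- Let X be a smooth manifold and ω a closed differential (n+1)-form on X. If v₁ and v₂ are Hamiltonian vector fields for ω (i.e. there exist (n−1)-forms h₁, h₂ with ι_{v₁}ω + dh₁ = 0 and ι_{v₂}ω + dh₂ = 0), then the Lie bracket [v₁, v₂] is again a Hamiltonian vector field, with Hamiltonian form ι_{v₁ ∧ v₂}ω = ι_{v₂}ι_{v₁}ω (up to sign conventions): ι_{[v₁,v₂]}ω + d(ι_{v₂}ι_{v₁}ω) = 0. -/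
/-!
A Hamiltonian vector field `v` has `ι_v ω` exact, hence closed; together with `dω = 0` this kills
every term of `ι_{[v,w]} ω = [L_v, ι_w] ω` except `d ι_v ι_w ω`, so `ι_{[v,w]} ω` is exact, and
skewness of double contractions turns `ι_v ι_w ω` into `-ι_w ι_v ω`.
-/

section CartanCalculus

variable {V : Type*} {Ω : ℕ → Type*} [∀ k, AddCommGroup (Ω k)]
  (d : ∀ {k : ℕ}, Ω k → Ω (k + 1)) (ι : ∀ {k : ℕ}, V → Ω (k + 1) → Ω k)

theorem d_contract_eq_zero_of_contract_add_d_eq_zero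
    (hd_add : ∀ {k : ℕ} (a b : Ω k), d (a + b) = d a + d b)
    (hdd : ∀ {k : ℕ} (a : Ω k), d (d a) = (0 : Ω (k + 2)))
    {m : ℕ} {ω : Ω (m + 2)} {v : V} {h : Ω m} (hv : ι v ω + d h = 0) :
    d (ι v ω) = 0 := by
  rw [eq_neg_of_add_eq_zero_left hv, ← neg_zero, ← hdd h]
  exact (AddMonoidHom.mk' d hd_add).map_neg (d h)

theorem contract_lie_eq_d_contract_contract [LieRing V]
    (hι_add : ∀ {k : ℕ} (v : V) (a b : Ω (k + 1)), ι v (a + b) = ι v a + ι v b)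
    (hcartan : ∀ {k : ℕ} (v w : V) (a : Ω (k + 2)),
      ι ⁅v, w⁆ a = (d (ι v (ι w a)) + ι v (d (ι w a))) - ι w (d (ι v a) + ι v (d a)))
    {m : ℕ} {ω : Ω (m + 2)} (hω : d ω = 0) {v w : V}
    (hvω : d (ι v ω) = 0) (hwω : d (ι w ω) = 0) :
    ι ⁅v, w⁆ ω = d (ι v (ι w ω)) := by
  have hι_zero : ∀ {k : ℕ} (u : V), ι u (0 : Ω (k + 1)) = 0 := fun u =>
    (AddMonoidHom.mk' (ι u) (hι_add u)).map_zero
  rw [hcartan, hvω, hwω, hω, hι_zero, hι_zero, add_zero, add_zero, hι_zero, sub_zero]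

end CartanCalculus

/-- Abstract Cartan-calculus model of a smooth manifold `X`:
`Ω k` is the space of differential `k`-forms, `d` the de Rham differential,
`ι` the interior product by vector fields `V` (a Lie algebra), subject to
`d ∘ d = 0`, the Cartan magic formula `L_v = d ι_v + ι_v d` and
`ι_{[v,w]} = [L_v, ι_w]`, and graded skewness of contractions.

Statement: if `ω` is a closed `(m+2)`-form (a pre-`(m+1)`-plectic form) and
`v₁, v₂` are Hamiltonian vector fields with Hamiltonian `m`-forms `h₁, h₂`
(`ι_{vᵢ} ω + d hᵢ = 0`), then `[v₁,v₂]` is again Hamiltonian, with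
Hamiltonian form `ι_{v₂} ι_{v₁} ω`. -/
theorem bracket_of_hamiltonian_is_hamiltonian
    {V : Type*} [LieRing V]
    {Ω : ℕ → Type*} [∀ k, AddCommGroup (Ω k)]
    (d : ∀ {k : ℕ}, Ω k → Ω (k + 1))
    (ι : ∀ {k : ℕ}, V → Ω (k + 1) → Ω k)
    (hd_add : ∀ {k : ℕ} (a b : Ω k), d (a + b) = d a + d b)
    (hι_add : ∀ {k : ℕ} (v : V) (a b : Ω (k + 1)), ι v (a + b) = ι v a + ι v b)
    (hdd : ∀ {k : ℕ} (a : Ω k), d (d a) = (0 : Ω (k + 2)))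
    (hι_skew : ∀ {k : ℕ} (v w : V) (a : Ω (k + 2)), ι v (ι w a) = - ι w (ι v a))
    (hcartan : ∀ {k : ℕ} (v w : V) (a : Ω (k + 2)),
      ι ⁅v, w⁆ a
        = (d (ι v (ι w a)) + ι v (d (ι w a)))
            - ι w (d (ι v a) + ι v (d a)))
    {m : ℕ} (ω : Ω (m + 2)) (hω : d ω = 0)
    (v₁ v₂ : V) (h₁ h₂ : Ω m)
    (hv₁ : ι v₁ ω + d h₁ = 0) (hv₂ : ι v₂ ω + d h₂ = 0) :
    ι ⁅v₁, v₂⁆ ω + d (ι v₂ (ι v₁ ω)) = 0 := by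
  have hbracket : ι ⁅v₁, v₂⁆ ω = d (ι v₁ (ι v₂ ω)) :=
    contract_lie_eq_d_contract_contract (Ω := Ω) d ι hι_add hcartan hω
      (d_contract_eq_zero_of_contract_add_d_eq_zero (Ω := Ω) d ι hd_add hdd hv₁)
      (d_contract_eq_zero_of_contract_add_d_eq_zero (Ω := Ω) d ι hd_add hdd hv₂)
  rw [hbracket, ← hd_add, hι_skew, neg_add_cancel]
  exact (AddMonoidHom.mk' d hd_add).map_zero
end

section
/- Let (X, ω) be a pre-n-plectic manifold. On the space Ω^{n−1}_{Ham}(X) = {(v,h) ∈ Γ(TX) ⊕ Ω^{n−1}(X) | ι_v ω + dh = 0}, the bracket [(v₁,h₁),(v₂,h₂)] := ([v₁,v₂], ι_{v₁∧v₂}ω) is well-defined, i.e. the pair ([v₁,v₂], ι_{v₂}ι_{v₁}ω) again satisfies the Hamiltonian pair condition ι_{[v₁,v₂]}ω + d(ι_{v₂}ι_{v₁}ω) = 0. -/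
/-!
By Cartan's formula `ι_{[v,w]} = [L_v, ι_w]`, on a closed form `ω` whose contractions `ι_v ω`,
`ι_w ω` are closed only the term `d ι_v ι_w ω` survives. A Hamiltonian pair makes `ι_v ω = -d h`
exact, hence closed, and skew-symmetry of contractions turns `d ι_{v₁} ι_{v₂} ω` into
`-d ι_{v₂} ι_{v₁} ω`.
-/

theorem map_zero_of_map_add {A B : Type*} [AddGroup A] [AddGroup B] {f : A → B}
    (hf : ∀ a b, f (a + b) = f a + f b) : f 0 = 0 :=
  (AddMonoidHom.mk' f hf).map_zero

section CartanCalculus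

variable {V : Type*} [LieRing V] {Ω : ℕ → Type*} [∀ k, AddCommGroup (Ω k)]
  (d : ∀ {k : ℕ}, Ω k → Ω (k + 1)) (ι : ∀ {k : ℕ}, V → Ω (k + 1) → Ω k)

theorem closed_of_add_exact_eq_zero (hd_add : ∀ {k : ℕ} (a b : Ω k), d (a + b) = d a + d b)
    (hdd : ∀ {k : ℕ} (a : Ω k), d (d a) = (0 : Ω (k + 2)))
    {k : ℕ} {a : Ω (k + 1)} {h : Ω k} (ha : a + d h = 0) : d a = 0 :=
  calc d a = d a + d (d h) := by rw [hdd, add_zero]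
    _ = 0 := by rw [← hd_add, ha, map_zero_of_map_add hd_add]

theorem interior_bracket_eq_d_interior_interior
    (hι_add : ∀ {k : ℕ} (v : V) (a b : Ω (k + 1)), ι v (a + b) = ι v a + ι v b)
    (hcartan : ∀ {k : ℕ} (v w : V) (a : Ω (k + 2)),
      ι ⁅v, w⁆ a = (d (ι v (ι w a)) + ι v (d (ι w a))) - ι w (d (ι v a) + ι v (d a)))
    {k : ℕ} {ω : Ω (k + 2)} (hω : d ω = 0) {v w : V}
    (hv : d (ι v ω) = 0) (hw : d (ι w ω) = 0) :
    ι ⁅v, w⁆ ω = d (ι v (ι w ω)) := by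
  simp only [hcartan, hω, hv, hw, map_zero_of_map_add (hι_add v),
    map_zero_of_map_add (hι_add w), add_zero, sub_zero]

end CartanCalculus

/-- Abstract Cartan-calculus model of a pre-`n`-plectic manifold `(X, ω)`
(`Ω k` = `k`-forms, `d` = de Rham differential, `ι` = interior product by
vector fields `V`, with the Cartan calculus identities as hypotheses).

Statement: the bracket `[(v₁,h₁),(v₂,h₂)] := ([v₁,v₂], ι_{v₁∧v₂}ω)`
(with `ι_{v₁∧v₂}ω = ι_{v₂}ι_{v₁}ω`) on Hamiltonian pairs is well defined:
if `ι_{v₁}ω + d h₁ = 0` and `ι_{v₂}ω + d h₂ = 0`, then the pair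
`([v₁,v₂], ι_{v₂}ι_{v₁}ω)` again satisfies the Hamiltonian pair condition
`ι_{[v₁,v₂]}ω + d (ι_{v₂}ι_{v₁}ω) = 0`. -/
theorem hamiltonian_pair_bracket_well_defined
    {V : Type*} [LieRing V]
    {Ω : ℕ → Type*} [∀ k, AddCommGroup (Ω k)]
    (d : ∀ {k : ℕ}, Ω k → Ω (k + 1))
    (ι : ∀ {k : ℕ}, V → Ω (k + 1) → Ω k)
    (hd_add : ∀ {k : ℕ} (a b : Ω k), d (a + b) = d a + d b)
    (hι_add : ∀ {k : ℕ} (v : V) (a b : Ω (k + 1)), ι v (a + b) = ι v a + ι v b)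
    (hdd : ∀ {k : ℕ} (a : Ω k), d (d a) = (0 : Ω (k + 2)))
    (hι_skew : ∀ {k : ℕ} (v w : V) (a : Ω (k + 2)), ι v (ι w a) = - ι w (ι v a))
    (hcartan : ∀ {k : ℕ} (v w : V) (a : Ω (k + 2)),
      ι ⁅v, w⁆ a
        = (d (ι v (ι w a)) + ι v (d (ι w a)))
            - ι w (d (ι v a) + ι v (d a)))
    {m : ℕ} (ω : Ω (m + 2)) (hω : d ω = 0)
    (v₁ v₂ : V) (h₁ h₂ : Ω m)
    (hv₁ : ι v₁ ω + d h₁ = 0) (hv₂ : ι v₂ ω + d h₂ = 0) :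
    ι ⁅v₁, v₂⁆ ω + d (ι v₂ (ι v₁ ω)) = 0 := by
  have hclosed₁ := closed_of_add_exact_eq_zero @d @hd_add @hdd hv₁
  have hclosed₂ := closed_of_add_exact_eq_zero @d @hd_add @hdd hv₂
  rw [interior_bracket_eq_d_interior_interior @d @ι @hι_add @hcartan hω hclosed₁ hclosed₂,
    ← hd_add, hι_skew, neg_add_cancel, map_zero_of_map_add hd_add]
end

section
/- For a pre-2-plectic manifold (X, ω) (ω a closed 3-form), the bracket [(v₁,h₁),(v₂,h₂)] = ([v₁,v₂], ι_{v₂}ι_{v₁}ω) on Hamiltonian pairs is skew-symmetric but in general fails the Jacobi identity by an exact term: the Jacobiator J((v₁,h₁),(v₂,h₂),(v₃,h₃)) equals −d(ι_{v₃}ι_{v₂}ι_{v₁}ω) in the Ω^1-component, i.e. the sum of cyclic permutations of [[(v₁,h₁),(v₂,h₂)],(v₃,h₃)] has vector-field component zero and 1-form component equal to an exact 1-form d(ι_{v₃}ι_{v₂}ι_{v₁}ω) up to sign. -/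
/-! The Hamiltonian condition `ι_v ω = -d h` makes each `ι_{vᵢ} ω` closed, so Cartan's formula
`ι_{[v,w]} = [L_v, ι_w]` collapses on `ω` to `ι_{[v,w]} ω = d ι_v ι_w ω`. Applying Cartan's formula
once more, to the closed 2-form `ι_{v₂} ω`, rewrites `ι_{[v₃,v₁]} ι_{v₂} ω` as a sum whose terms are,
up to sign, the three summands of the Jacobiator together with `d ι_{v₃} ι_{v₁} ι_{v₂} ω`. -/

theorem lie_lie_add_lie_lie_add_lie_lie_eq_zero {L : Type*} [LieRing L] (x y z : L) :
    ⁅⁅x, y⁆, z⁆ + ⁅⁅y, z⁆, x⁆ + ⁅⁅z, x⁆, y⁆ = 0 := by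
  rw [← neg_eq_zero, neg_add, neg_add, lie_skew, lie_skew, lie_skew]
  exact lie_jacobi z x y

section CartanCalculus

variable {V : Type*} [LieRing V] {Ω : ℕ → Type*} [∀ k, AddCommGroup (Ω k)]
  (d : ∀ {k : ℕ}, Ω k → Ω (k + 1)) (ι : ∀ {k : ℕ}, V → Ω (k + 1) → Ω k)

theorem d_eq_zero_of_add_d_eq_zero (hd_add : ∀ {k : ℕ} (a b : Ω k), d (a + b) = d a + d b)
    (hdd : ∀ {k : ℕ} (a : Ω k), d (d a) = (0 : Ω (k + 2)))
    {k : ℕ} {a : Ω (k + 1)} {h : Ω k} (hah : a + d h = 0) : d a = 0 := by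
  have d_neg : ∀ b : Ω (k + 1), d (-b) = -d b := (AddMonoidHom.mk' d hd_add).map_neg
  rw [eq_neg_of_add_eq_zero_left hah, d_neg, hdd, neg_zero]

theorem ι_lie_of_d_eq_zero
    (hι_add : ∀ {k : ℕ} (v : V) (a b : Ω (k + 1)), ι v (a + b) = ι v a + ι v b)
    (hcartan : ∀ {k : ℕ} (v w : V) (a : Ω (k + 2)),
      ι ⁅v, w⁆ a = (d (ι v (ι w a)) + ι v (d (ι w a))) - ι w (d (ι v a) + ι v (d a)))
    {k : ℕ} (v w : V) {a : Ω (k + 2)} (ha : d a = 0) :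
    ι ⁅v, w⁆ a = d (ι v (ι w a)) + ι v (d (ι w a)) - ι w (d (ι v a)) := by
  have ι_zero : ι v (0 : Ω (k + 3)) = 0 := (AddMonoidHom.mk' (ι v) (hι_add v)).map_zero
  rw [hcartan, ha, ι_zero, add_zero]

theorem ι_lie_eq_d_ι_ι_of_closed
    (hι_add : ∀ {k : ℕ} (v : V) (a b : Ω (k + 1)), ι v (a + b) = ι v a + ι v b)
    (hcartan : ∀ {k : ℕ} (v w : V) (a : Ω (k + 2)),
      ι ⁅v, w⁆ a = (d (ι v (ι w a)) + ι v (d (ι w a))) - ι w (d (ι v a) + ι v (d a)))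
    {k : ℕ} {v w : V} {a : Ω (k + 2)} (ha : d a = 0) (hv : d (ι v a) = 0)
    (hw : d (ι w a) = 0) : ι ⁅v, w⁆ a = d (ι v (ι w a)) := by
  have ι_zero : ∀ u : V, ι u (0 : Ω (k + 2)) = 0 :=
    fun u => (AddMonoidHom.mk' (ι u) (hι_add u)).map_zero
  rw [ι_lie_of_d_eq_zero @d @ι hι_add hcartan v w ha, hv, hw, ι_zero, ι_zero, add_zero, sub_zero]

theorem cyclic_ι_ι_lie_eq_d_ι_ι_ι_of_closed
    (hd_add : ∀ {k : ℕ} (a b : Ω k), d (a + b) = d a + d b)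
    (hι_add : ∀ {k : ℕ} (v : V) (a b : Ω (k + 1)), ι v (a + b) = ι v a + ι v b)
    (hι_skew : ∀ {k : ℕ} (v w : V) (a : Ω (k + 2)), ι v (ι w a) = - ι w (ι v a))
    (hcartan : ∀ {k : ℕ} (v w : V) (a : Ω (k + 2)),
      ι ⁅v, w⁆ a = (d (ι v (ι w a)) + ι v (d (ι w a))) - ι w (d (ι v a) + ι v (d a)))
    {k : ℕ} {a : Ω (k + 3)} (ha : d a = 0) {v₁ v₂ v₃ : V} (h₁ : d (ι v₁ a) = 0)
    (h₂ : d (ι v₂ a) = 0) (h₃ : d (ι v₃ a) = 0) :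
    ι v₃ (ι ⁅v₁, v₂⁆ a) + ι v₁ (ι ⁅v₂, v₃⁆ a) + ι v₂ (ι ⁅v₃, v₁⁆ a)
      = d (ι v₃ (ι v₂ (ι v₁ a))) := by
  have d_neg : ∀ {k : ℕ} (b : Ω k), d (-b) = -d b := (AddMonoidHom.mk' d hd_add).map_neg
  have ι_neg : ∀ {k : ℕ} (v : V) (b : Ω (k + 1)), ι v (-b) = -ι v b :=
    fun v => (AddMonoidHom.mk' (ι v) (hι_add v)).map_neg
  have exact_lie := fun {v w : V} =>
    ι_lie_eq_d_ι_ι_of_closed @d @ι hι_add hcartan (v := v) (w := w) ha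
  have cartan_ι₂ := ι_lie_of_d_eq_zero @d @ι hι_add hcartan v₃ v₁ h₂
  rw [hι_skew ⁅v₃, v₁⁆ v₂ a, exact_lie h₃ h₁, hι_skew v₃ v₂ a, d_neg, ι_neg, sub_neg_eq_add,
    neg_eq_iff_eq_neg] at cartan_ι₂
  rw [exact_lie h₁ h₂, exact_lie h₂ h₃, exact_lie h₃ h₁, hι_skew v₂ v₁ a, ι_neg, d_neg, cartan_ι₂]
  abel

end CartanCalculus

theorem pre_two_plectic_bracket_skew_and_jacobiator_exact
    {V : Type*} [LieRing V]
    {Ω : ℕ → Type*} [∀ k, AddCommGroup (Ω k)]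
    (d : ∀ {k : ℕ}, Ω k → Ω (k + 1))
    (ι : ∀ {k : ℕ}, V → Ω (k + 1) → Ω k)
    (hd_add : ∀ {k : ℕ} (a b : Ω k), d (a + b) = d a + d b)
    (hι_add : ∀ {k : ℕ} (v : V) (a b : Ω (k + 1)), ι v (a + b) = ι v a + ι v b)
    (hdd : ∀ {k : ℕ} (a : Ω k), d (d a) = (0 : Ω (k + 2)))
    (hι_skew : ∀ {k : ℕ} (v w : V) (a : Ω (k + 2)), ι v (ι w a) = - ι w (ι v a))
    (hcartan : ∀ {k : ℕ} (v w : V) (a : Ω (k + 2)),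
      ι ⁅v, w⁆ a
        = (d (ι v (ι w a)) + ι v (d (ι w a)))
            - ι w (d (ι v a) + ι v (d a)))
    (ω : Ω 3) (hω : d ω = 0)
    (v₁ v₂ v₃ : V) (h₁ h₂ h₃ : Ω 1)
    (hv₁ : ι v₁ ω + d h₁ = 0) (hv₂ : ι v₂ ω + d h₂ = 0) (hv₃ : ι v₃ ω + d h₃ = 0) :
    -- skew-symmetry of the bracket on Hamiltonian pairs
    ((⁅v₁, v₂⁆, ι v₂ (ι v₁ ω)) = -((⁅v₂, v₁⁆, ι v₁ (ι v₂ ω)) : V × Ω 1))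
    -- the Jacobiator: vanishing vector-field component
    ∧ (⁅⁅v₁, v₂⁆, v₃⁆ + ⁅⁅v₂, v₃⁆, v₁⁆ + ⁅⁅v₃, v₁⁆, v₂⁆ = (0 : V))
    -- ... and exact 1-form component, up to sign
    ∧ (ι v₃ (ι ⁅v₁, v₂⁆ ω) + ι v₁ (ι ⁅v₂, v₃⁆ ω) + ι v₂ (ι ⁅v₃, v₁⁆ ω)
          = d (ι v₃ (ι v₂ (ι v₁ ω)))
        ∨ ι v₃ (ι ⁅v₁, v₂⁆ ω) + ι v₁ (ι ⁅v₂, v₃⁆ ω) + ι v₂ (ι ⁅v₃, v₁⁆ ω)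
          = - d (ι v₃ (ι v₂ (ι v₁ ω)))) := by
  have closed : ∀ {v : V} {h : Ω 1}, ι v ω + d h = 0 → d (ι v ω) = 0 :=
    d_eq_zero_of_add_d_eq_zero @d hd_add hdd
  refine ⟨?_, lie_lie_add_lie_lie_add_lie_lie_eq_zero v₁ v₂ v₃, Or.inl ?_⟩
  · exact Prod.ext (lie_skew v₁ v₂).symm (hι_skew v₂ v₁ ω)
  · exact cyclic_ι_ι_lie_eq_d_ι_ι_ι_of_closed @d @ι hd_add hι_add hι_skew hcartan (a := ω) hω
      (closed hv₁) (closed hv₂) (closed hv₃)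
end
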